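/- arXiv:math/0209293 — 4 statements merged into one kernel-verified Lean document; each statement's English description precedes it below -/
import Mathlib

section
/- Let (A, m) be a Noetherian local ring, let I ⊆ m be an ideal, let M be a finitely generated A-module, and let L ⊆ K be submodules of M such that the length λ(K/L) is finite. Then λ(K/L) = Σ_{n ≥ 0} λ( ((K ∩ IⁿM) + I^{n+1}M) / ((L ∩ IⁿM) + I^{n+1}M) ), and moreover all but finitely many of the summands are zero. (Dade's Lemma, Lemma 2.7 of the paper.) -/
/-!
Put `Kₙ = L + (K ∩ IⁿM)`, a decreasing chain of submodules from `K₀ = K` down towards `L`.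
By the modular law both `Kₙ/Kₙ₊₁` and the `n`-th summand are isomorphic to
`(K ∩ IⁿM)/((L ∩ IⁿM) + (K ∩ Iⁿ⁺¹M))`, so additivity of length telescopes
`λ(K/L) = λ(K/K_N) + λ(K_N/L)` into the first `N` summands. Since `λ(K/L) < ∞` the chain is
eventually constant, and at a stable index `n` beyond the Artin–Rees bound
`Kₙ = Kₙ₊₁ = L + I(K ∩ IⁿM) ⊆ L + IKₙ`, hence `Kₙ = L` by Nakayama's lemma.
-/

/-- The length of a module, i.e. the Krull dimension of its submodule lattice,
as an element of `ℕ∞`. -/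
noncomputable def moduleLength (A M : Type*) [CommRing A] [AddCommGroup M] [Module A M] : ℕ∞ :=
  (Order.krullDim (Submodule A M)).unbotD 0

/-- `lenQuot L K` is the length `λ(K/L)` of the subquotient `K/L` of `M`,
realized as the image of `K` in `M ⧸ L`. -/
noncomputable def lenQuot {A M : Type*} [CommRing A] [AddCommGroup M] [Module A M]
    (L K : Submodule A M) : ℕ∞ :=
  moduleLength A ↥(K.map L.mkQ)

section LenQuot

variable {A M : Type*} [CommRing A] [AddCommGroup M] [Module A M]

variable (A M) in
theorem moduleLength_eq_length : moduleLength A M = Module.length A M := by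
  rw [moduleLength, ← Module.coe_length, WithBot.unbotD_coe]

theorem lenQuot_eq_length_quotient (L K : Submodule A M) :
    lenQuot L K = Module.length A (K ⧸ L.comap K.subtype) := by
  let f := L.mkQ ∘ₗ K.subtype
  have hker : LinearMap.ker f = L.comap K.subtype := by
    rw [LinearMap.ker_comp, Submodule.ker_mkQ]
  have hrange : LinearMap.range f = K.map L.mkQ := by
    rw [LinearMap.range_comp, Submodule.range_subtype]
  rw [lenQuot, moduleLength_eq_length]
  exact ((Submodule.quotEquivOfEq _ _ hker.symm).trans
    (f.quotKerEquivRange.trans (LinearEquiv.ofEq _ _ hrange))).length_eq.symm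

theorem lenQuot_eq_zero_iff {L K : Submodule A M} : lenQuot L K = 0 ↔ K ≤ L := by
  rw [lenQuot, moduleLength_eq_length, Module.length_eq_zero_iff,
    Submodule.subsingleton_iff_eq_bot, ← LinearMap.le_ker_iff_map, Submodule.ker_mkQ]

theorem lenQuot_self (L : Submodule A M) : lenQuot L L = 0 :=
  lenQuot_eq_zero_iff.2 le_rfl

/-- The exact sequence `0 → K'/L → K/L → K/K' → 0`. -/
theorem lenQuot_add {L K' K : Submodule A M} (hL : L ≤ K') (hK : K' ≤ K) :
    lenQuot L K = lenQuot L K' + lenQuot K' K := by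
  simp only [lenQuot, moduleLength_eq_length]
  refine Module.length_eq_add_of_exact (Submodule.inclusion (Submodule.map_mono hK))
    ((Submodule.factor hL).restrict fun x hx => ?_) (Submodule.inclusion_injective _) ?_ ?_
  · obtain ⟨k, hk, rfl⟩ := hx
    exact ⟨k, hk, rfl⟩
  · rintro ⟨_, k, hk, rfl⟩
    exact ⟨⟨L.mkQ k, k, hk, rfl⟩, rfl⟩
  · rw [LinearMap.exact_iff, LinearMap.ker_restrict, Submodule.range_inclusion, Submodule.factor,
      Submodule.ker_mapQ, Submodule.comap_id]

theorem lenQuot_inf_eq_lenQuot_sup (P Q : Submodule A M) :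
    lenQuot (P ⊓ Q) P = lenQuot Q (P ⊔ Q) := by
  rw [lenQuot_eq_length_quotient, lenQuot_eq_length_quotient, Submodule.comap_inf]
  exact (LinearMap.quotientInfEquivSupQuotient P Q).length_eq

theorem lenQuot_eq_sum_of_antitone {S : ℕ → Submodule A M} (hS : Antitone S) (N : ℕ) :
    lenQuot (S N) (S 0) = ∑ n ∈ Finset.range N, lenQuot (S (n + 1)) (S n) := by
  induction N with
  | zero => simp [lenQuot_self]
  | succ N ih =>
    rw [Finset.sum_range_succ, ← ih, lenQuot_add (hS N.le_succ) (hS N.zero_le), add_comm]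

theorem exists_forall_ge_eq_of_antitone_of_lenQuot_ne_top {L : Submodule A M}
    {S : ℕ → Submodule A M} (hS : Antitone S) (hLS : ∀ n, L ≤ S n) (hfin : lenQuot L (S 0) ≠ ⊤) :
    ∃ N, ∀ n ≥ N, S n = S N := by
  have hadd {m n : ℕ} (h : m ≤ n) : lenQuot L (S m) = lenQuot L (S n) + lenQuot (S n) (S m) :=
    lenQuot_add (hLS n) (hS h)
  obtain ⟨N, hN⟩ := WellFoundedLT.antitone_chain_condition (f := fun n => lenQuot L (S n))
    fun m n h => le_self_add.trans (hadd h).ge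
  refine ⟨N, fun n hn => le_antisymm (hS hn) (lenQuot_eq_zero_iff.1 ?_)⟩
  have hfinN : lenQuot L (S N) ≠ ⊤ := ne_top_of_le_ne_top hfin (le_self_add.trans (hadd N.zero_le).ge)
  have hsplit := hadd hn
  rw [← hN n hn] at hsplit
  exact (WithTop.add_left_inj hfinN).1 (hsplit.symm.trans (add_zero _).symm)

end LenQuot

section DadeChain

variable {A M : Type*} [CommRing A] [AddCommGroup M] [Module A M]
variable (I : Ideal A) (L K : Submodule A M)

def dadeChain (n : ℕ) : Submodule A M :=
  L ⊔ K ⊓ I ^ n • ⊤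

theorem dadeChain_zero {L K : Submodule A M} (hLK : L ≤ K) : dadeChain I L K 0 = K := by
  simp [dadeChain, hLK]

theorem dadeChain_antitone : Antitone (dadeChain I L K) := fun _ _ h =>
  sup_le_sup_left (inf_le_inf_left K (Submodule.smul_mono_left (Ideal.pow_le_pow_right h))) L

theorem lenQuot_dadeChain_succ {L K : Submodule A M} (hLK : L ≤ K) (n : ℕ) :
    lenQuot (dadeChain I L K (n + 1)) (dadeChain I L K n) =
      lenQuot (L ⊓ I ^ n • ⊤ + I ^ (n + 1) • ⊤) (K ⊓ I ^ n • ⊤ + I ^ (n + 1) • ⊤) := by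
  set F : ℕ → Submodule A M := fun n => I ^ n • ⊤
  have hF : F (n + 1) ≤ F n := Submodule.smul_mono_left (Ideal.pow_le_pow_right n.le_succ)
  set X := K ⊓ F n
  have hKX : K ⊓ F (n + 1) ≤ X := inf_le_inf_left K hF
  have hLX : L ⊓ F n ≤ X := inf_le_inf_right _ hLK
  have hinf_chain : X ⊓ (L ⊔ K ⊓ F (n + 1)) = L ⊓ F n ⊔ K ⊓ F (n + 1) := by
    rw [inf_comm, sup_comm, sup_inf_assoc_of_le L hKX, sup_comm, ← inf_assoc, inf_eq_left.2 hLK]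
  have hsup_chain : X ⊔ (L ⊔ K ⊓ F (n + 1)) = L ⊔ K ⊓ F n := by
    rw [sup_left_comm, sup_eq_left.2 hKX]
  have hinf_graded : X ⊓ (L ⊓ F n ⊔ F (n + 1)) = L ⊓ F n ⊔ K ⊓ F (n + 1) := by
    rw [inf_comm, sup_inf_assoc_of_le _ hLX, inf_left_comm, inf_eq_left.2 hF]
  have hsup_graded : X ⊔ (L ⊓ F n ⊔ F (n + 1)) = K ⊓ F n ⊔ F (n + 1) := by
    rw [← sup_assoc, sup_eq_left.2 hLX]
  calc lenQuot (L ⊔ K ⊓ F (n + 1)) (L ⊔ K ⊓ F n)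
      = lenQuot (X ⊓ (L ⊔ K ⊓ F (n + 1))) X := by
        rw [← hsup_chain, lenQuot_inf_eq_lenQuot_sup]
    _ = lenQuot (X ⊓ (L ⊓ F n ⊔ F (n + 1))) X := by rw [hinf_chain, hinf_graded]
    _ = lenQuot (L ⊓ F n ⊔ F (n + 1)) (K ⊓ F n ⊔ F (n + 1)) := by
      rw [← hsup_graded, lenQuot_inf_eq_lenQuot_sup]

theorem dadeChain_eq_of_forall_ge_eq [IsNoetherianRing A] [Module.Finite A M]
    (hI : I ≤ Ideal.jacobson ⊥) {N : ℕ} (hN : ∀ n ≥ N, dadeChain I L K n = dadeChain I L K N) :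
    dadeChain I L K N = L := by
  obtain ⟨k, hk⟩ := I.exists_pow_inf_eq_pow_smul K
  set n := max N k
  have hsucc : I ^ (n + 1) • ⊤ ⊓ K = I • (I ^ n • ⊤ ⊓ K) := by
    rw [hk (n + 1) (by omega), hk n (le_max_right _ _), show n + 1 - k = n - k + 1 by omega,
      pow_succ', mul_smul]
  have hle : dadeChain I L K n ≤ L ⊔ I • dadeChain I L K n := calc
    dadeChain I L K n = dadeChain I L K (n + 1) :=
      (hN n (by omega)).trans (hN (n + 1) (by omega)).symm
    _ = L ⊔ I • (I ^ n • ⊤ ⊓ K) := by rw [dadeChain, inf_comm, hsucc]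
    _ ≤ L ⊔ I • dadeChain I L K n :=
      sup_le_sup_left (smul_mono_right _ (inf_comm K _ ▸ le_sup_right)) L
  rw [← hN n (le_max_left _ _)]
  exact le_antisymm (Submodule.le_of_le_smul_of_le_jacobson_bot (IsNoetherian.noetherian _) hI hle)
    le_sup_left

end DadeChain

/-- **Dade's Lemma** (Lemma 2.7): if `L ≤ K` are submodules of a finitely generated
module `M` over a Noetherian local ring `(A, 𝔪)` with `λ(K/L)` finite, and `I ≤ 𝔪`
is an ideal, then `λ(K/L) = Σ_{n ≥ 0} λ(((K ⊓ IⁿM) + I^{n+1}M)/((L ⊓ IⁿM) + I^{n+1}M))`,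
all but finitely many of the summands being zero. -/
theorem stmt_0 {A M : Type*} [CommRing A] [IsLocalRing A] [IsNoetherianRing A]
    [AddCommGroup M] [Module A M] [Module.Finite A M]
    (I : Ideal A) (hI : I ≤ IsLocalRing.maximalIdeal A)
    (L K : Submodule A M) (hLK : L ≤ K) (hfin : lenQuot L K < ⊤) :
    ∃ N : ℕ,
      (∀ n ≥ N,
        lenQuot ((L ⊓ I ^ n • (⊤ : Submodule A M)) + I ^ (n + 1) • (⊤ : Submodule A M))
          ((K ⊓ I ^ n • (⊤ : Submodule A M)) + I ^ (n + 1) • (⊤ : Submodule A M)) = 0) ∧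
      lenQuot L K = ∑ n ∈ Finset.range N,
        lenQuot ((L ⊓ I ^ n • (⊤ : Submodule A M)) + I ^ (n + 1) • (⊤ : Submodule A M))
          ((K ⊓ I ^ n • (⊤ : Submodule A M)) + I ^ (n + 1) • (⊤ : Submodule A M)) := by
  have hjac : I ≤ Ideal.jacobson ⊥ := by
    rwa [IsLocalRing.jacobson_eq_maximalIdeal ⊥ bot_ne_top]
  obtain ⟨N, hN⟩ := exists_forall_ge_eq_of_antitone_of_lenQuot_ne_top (dadeChain_antitone I L K)
    (fun _ => le_sup_left) (by rw [dadeChain_zero I hLK]; exact hfin.ne)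
  refine ⟨N, fun n hn => ?_, ?_⟩
  · rw [← lenQuot_dadeChain_succ I hLK, hN n hn, hN (n + 1) (by omega), lenQuot_self]
  · simp_rw [← lenQuot_dadeChain_succ I hLK]
    rw [← lenQuot_eq_sum_of_antitone (dadeChain_antitone I L K),
      dadeChain_eq_of_forall_ge_eq I L K hjac hN, dadeChain_zero I hLK]
end

section
/- Let A be a Noetherian integral domain and let I ⊆ J be ideals of A with I ≠ 0. If there exist natural numbers s and t such that I^{s+1} · Jᵗ = Iˢ · J^{t+1} (as ideals of A), then I is a reduction of J, i.e. there exists n with I · Jⁿ = J^{n+1}. (Claim in the proof of part (3) of the five-part Lemma in Section 4.) -/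
/-!
Put `M = Iˢ Jᵗ`; the hypothesis says `J M = I M`. As a nonzero finitely generated ideal of a
domain, `M` is a faithful module, so the determinant trick (Cayley–Hamilton) gives every `x ∈ J`
an equation `xⁿ + a₁ xⁿ⁻¹ + ⋯ + aₙ = 0` with `aₖ ∈ Iᵏ`, whence `x ^ n ∈ I J ^ (n - 1)`. Since `J`
is finitely generated, the binomial theorem assembles these statements for finitely many
generators into `J ^ (c + 1) ⊆ I J ^ c`; the reverse inclusion holds because `I ⊆ J`.
-/

open Polynomial

namespace Ideal

variable {A : Type*} [CommRing A]

theorem pow_mul_pow_le_mul_pow {I J P Q : Ideal A} (hP : P ≤ J) (hQ : Q ≤ J) {c j : ℕ}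
    (hPc : P ^ (c + 1) ≤ I * J ^ c) (hj : c + 1 ≤ j) (k : ℕ) :
    P ^ j * Q ^ k ≤ I * J ^ (j + k - 1) :=
  calc P ^ j * Q ^ k = P ^ (c + 1) * (P ^ (j - (c + 1)) * Q ^ k) := by
        rw [← mul_assoc, ← pow_add, Nat.add_sub_cancel' hj]
    _ ≤ I * J ^ c * (J ^ (j - (c + 1)) * J ^ k) := by gcongr
    _ = I * J ^ (j + k - 1) := by
        rw [mul_assoc, ← pow_add, ← pow_add]
        congr 2
        omega

theorem sup_pow_succ_le_mul_pow {I J P Q : Ideal A} (hP : P ≤ J) (hQ : Q ≤ J) {c d : ℕ}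
    (hPc : P ^ (c + 1) ≤ I * J ^ c) (hQd : Q ^ (d + 1) ≤ I * J ^ d) :
    (P ⊔ Q) ^ (c + d + 1) ≤ I * J ^ (c + d) := by
  -- In each binomial term `Pʲ Q^(c + d + 1 - j)`, either `c + 1 ≤ j` or `d + 1 ≤ c + d + 1 - j`.
  rw [← add_eq_sup, add_pow, sum_eq_sup]
  refine Finset.sup_le fun j hj => mul_le_left.trans ?_
  have hj := Finset.mem_range.mp hj
  by_cases hjc : c + 1 ≤ j
  · exact (pow_mul_pow_le_mul_pow hP hQ hPc hjc (c + d + 1 - j)).trans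
      (mul_mono_right (pow_le_pow_right (show c + d ≤ j + (c + d + 1 - j) - 1 by omega)))
  · rw [mul_comm (P ^ j)]
    exact (pow_mul_pow_le_mul_pow hQ hP hQd (by omega) j).trans
      (mul_mono_right (pow_le_pow_right (show c + d ≤ c + d + 1 - j + j - 1 by omega)))

theorem exists_pow_succ_le_mul_pow_of_fg {I J : Ideal A} (hJ : J.FG)
    (hx : ∀ x ∈ J, ∃ d, x ^ (d + 1) ∈ I * J ^ d) : ∃ c, J ^ (c + 1) ≤ I * J ^ c := by
  suffices ∀ N : Ideal A, N.FG → N ≤ J → ∃ c, N ^ (c + 1) ≤ I * J ^ c from this J hJ le_rfl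
  intro N hN
  induction N, hN using Submodule.fg_induction with
  | singleton x =>
    intro hxJ
    obtain ⟨d, hd⟩ := hx x (hxJ (Submodule.mem_span_singleton_self x))
    exact ⟨d, by rwa [span_singleton_pow, span_singleton_le_iff_mem]⟩
  | sup N₁ N₂ _ _ ih₁ ih₂ =>
    intro hN
    obtain ⟨c, hc⟩ := ih₁ (le_sup_left.trans hN)
    obtain ⟨d, hd⟩ := ih₂ (le_sup_right.trans hN)
    exact ⟨c + d, sup_pow_succ_le_mul_pow (le_sup_left.trans hN) (le_sup_right.trans hN) hc hd⟩

theorem pow_natDegree_mem_mul_pow {I J : Ideal A} (hIJ : I ≤ J) {x : A} (hx : x ∈ J)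
    {p : A[X]} (hp : p.Monic) (hcoeff : ∀ k, p.coeff k ∈ I ^ (p.natDegree - k))
    (hpx : aeval x p = 0) : x ^ p.natDegree ∈ I * J ^ (p.natDegree - 1) := by
  have hsum : x ^ p.natDegree = -∑ k ∈ Finset.range p.natDegree, p.coeff k * x ^ k := by
    rw [hp.as_sum] at hpx
    simpa [eq_neg_iff_add_eq_zero, eval_finsetSum] using hpx
  rw [hsum]
  refine neg_mem (Ideal.sum_mem _ fun k hk => ?_)
  have hk := Finset.mem_range.mp hk
  have hI : I ^ (p.natDegree - k) ≤ I * J ^ (p.natDegree - k - 1) := by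
    rw [show p.natDegree - k = p.natDegree - k - 1 + 1 by omega, pow_succ']
    exact mul_mono_right (pow_right_mono hIJ _)
  have hmem := mul_mem_mul (hI (hcoeff k)) (pow_mem_pow hx k)
  rwa [mul_assoc, ← pow_add, show p.natDegree - k - 1 + k = p.natDegree - 1 by omega] at hmem

theorem exists_monic_coeff_mem_pow_aeval_eq_zero {M : Type*} [AddCommGroup M] [Module A M]
    [Module.Finite A M] [FaithfulSMul A M] (I : Ideal A) {x : A}
    (hx : ∀ m : M, x • m ∈ I • (⊤ : Submodule A M)) :
    ∃ p : A[X], p.Monic ∧ (∀ k, p.coeff k ∈ I ^ (p.natDegree - k)) ∧ aeval x p = 0 := by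
  obtain ⟨p, hp, -, hcoeff, hpx⟩ :=
    LinearMap.exists_monic_and_natDegree_eq_and_coeff_mem_pow_and_aeval_eq_zero A
      (Algebra.lsmul A A M x) I (by rintro _ ⟨m, rfl⟩; exact hx m)
  refine ⟨p, hp, hcoeff, eq_of_smul_eq_smul (α := M) fun m => ?_⟩
  rw [aeval_algHom_apply] at hpx
  simpa using LinearMap.congr_fun hpx m

theorem exists_pow_succ_mem_mul_pow_of_mul_le [IsDomain A] {I J M : Ideal A} (hIJ : I ≤ J)
    (hM : M ≠ ⊥) (hMfg : M.FG) (hJM : J * M ≤ I * M) {x : A} (hx : x ∈ J) :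
    ∃ d, x ^ (d + 1) ∈ I * J ^ d := by
  have : Module.Finite A M := Module.Finite.iff_fg.mpr hMfg
  have : FaithfulSMul A M := by
    obtain ⟨m, hmM, hm⟩ := Submodule.exists_mem_ne_zero_of_ne_bot hM
    exact ⟨fun h => mul_right_cancel₀ hm (congrArg Subtype.val (h ⟨m, hmM⟩))⟩
  obtain ⟨p, hp, hcoeff, hpx⟩ := exists_monic_coeff_mem_pow_aeval_eq_zero I
    (M := M) fun m => (Submodule.mem_smul_top_iff I M _).mpr (hJM (mul_mem_mul hx m.2))
  have hdeg : p.natDegree ≠ 0 := fun h => by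
    simp [(hp.natDegree_eq_zero).mp h] at hpx
  refine ⟨p.natDegree - 1, ?_⟩
  rw [Nat.sub_add_cancel (Nat.pos_of_ne_zero hdeg)]
  exact pow_natDegree_mem_mul_pow hIJ hx hp hcoeff hpx

end Ideal

/-- Claim in the proof of part (3) of the five-part Lemma in Section 4: in a
Noetherian domain, if `I ≤ J`, `I ≠ 0`, and `I^{s+1} Jᵗ = Iˢ J^{t+1}` for some
`s, t`, then `I` is a reduction of `J`. -/
theorem stmt_5 {A : Type*} [CommRing A] [IsDomain A] [IsNoetherianRing A]
    (I J : Ideal A) (hIJ : I ≤ J) (hI : I ≠ ⊥)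
    (h : ∃ s t : ℕ, I ^ (s + 1) * J ^ t = I ^ s * J ^ (t + 1)) :
    ∃ n : ℕ, I * J ^ n = J ^ (n + 1) := by
  obtain ⟨s, t, h⟩ := h
  have hM : I ^ s * J ^ t ≠ ⊥ :=
    mul_ne_zero (pow_ne_zero _ hI) (pow_ne_zero _ (ne_bot_of_le_ne_bot hI hIJ))
  have hJM : J * (I ^ s * J ^ t) = I * (I ^ s * J ^ t) := by
    rw [mul_left_comm, ← pow_succ', ← mul_assoc, ← pow_succ', h]
  obtain ⟨c, hc⟩ := Ideal.exists_pow_succ_le_mul_pow_of_fg (IsNoetherian.noetherian J)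
    fun x hx => Ideal.exists_pow_succ_mem_mul_pow_of_mul_le hIJ hM
      (IsNoetherian.noetherian _) hJM.le hx
  exact ⟨c, le_antisymm (pow_succ' J c ▸ Ideal.mul_mono_left hIJ) hc⟩
end

section
/- Let (A, m) be a Noetherian local ring and let M be a finitely generated A-module that is equidimensional, i.e. for every minimal prime p over the annihilator Ann_A M one has dim(A/p) = dim(A/Ann_A M) (Krull dimensions of the quotient rings). Let I ⊆ J be ideals of A such that dim(A/(I + Ann_A M)) < dim(A/Ann_A M) (equivalently, dim M/IM < dim M). If for some k ≥ 1 and some n one has I • (Jⁿ • (Iᵏ • M)) = J^{n+1} • (Iᵏ • M), then there exists n' with I • (Jⁿ' • M) = J^{n'+1} • M; that is, if I is a reduction of (J, IᵏM), then I is a reduction of (J, M). (Part (3) of the five-part Lemma in Section 4.) -/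
/-!
Put `N = Jⁿ Iᵏ M`, so that `J N = I N`. By Cayley–Hamilton every `x ∈ J` satisfies on `N` an
equation of integral dependence `p` over `I`, so `p(x) Jⁿ Iᵏ` kills `M`. Equidimensionality and
`dim M/IM < dim M` keep `I`, hence `Jⁿ Iᵏ`, outside every minimal prime of `Ann M`; therefore
`p(x)` lies in the radical of `Ann M` and a power `p(x)ˢ` kills `M`. Thus `x` is integral over `I`
relative to `M`: `x^(r+1) M ⊆ I Jʳ M` for some `r`. Such relations for finitely many generators
of `J` combine, via the binomial expansion, into `J^(r+1) M ⊆ I Jʳ M`.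
-/

open Polynomial

section

variable {A M : Type*} [CommRing A] [AddCommGroup M] [Module A M]

namespace Polynomial

/-- An equation of integral dependence `Xᵈ + a₁ Xᵈ⁻¹ + ⋯ + a_d` over `I`, i.e. `aⱼ ∈ Iʲ`. -/
def IsIntegralEquation (I : Ideal A) (p : A[X]) : Prop :=
  p.Monic ∧ ∀ i, p.coeff i ∈ I ^ (p.natDegree - i)

variable {I : Ideal A} {p q : A[X]}

theorem isIntegralEquation_X : IsIntegralEquation I X := by
  refine ⟨monic_X, fun i => ?_⟩
  rcases eq_or_ne i 1 with rfl | hi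
  · simp [Nat.sub_eq_zero_of_le natDegree_X_le]
  · simp [coeff_X, Ne.symm hi]

theorem IsIntegralEquation.mul (hp : IsIntegralEquation I p) (hq : IsIntegralEquation I q) :
    IsIntegralEquation I (p * q) := by
  refine ⟨hp.1.mul hq.1, fun i => ?_⟩
  rw [hp.1.natDegree_mul hq.1, coeff_mul]
  refine Ideal.sum_mem _ fun ⟨a, b⟩ hab => ?_
  rw [Finset.HasAntidiagonal.mem_antidiagonal] at hab
  have := Ideal.mul_mem_mul (hp.2 a) (hq.2 b)
  rw [← pow_add] at this
  exact Ideal.pow_le_pow_right (by omega) this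

theorem IsIntegralEquation.pow (hp : IsIntegralEquation I p) (s : ℕ) :
    IsIntegralEquation I (p ^ s) := by
  induction s with
  | zero => exact ⟨monic_one, fun i => by simp⟩
  | succ s ih => rw [pow_succ]; exact ih.mul hp

end Polynomial

namespace Ideal

theorem pow_mul_pow_le_mul_pow_s6 {I J : Ideal A} (hIJ : I ≤ J) {i r : ℕ} (hi : i ≤ r) :
    I ^ (r + 1 - i) * J ^ i ≤ I * J ^ r := by
  calc I ^ (r + 1 - i) * J ^ i = I * (I ^ (r - i) * J ^ i) := by
        rw [← mul_assoc, ← pow_succ', Nat.sub_add_comm hi]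
    _ ≤ I * (J ^ (r - i) * J ^ i) := by gcongr
    _ = I * J ^ r := by rw [← pow_add, Nat.sub_add_cancel hi]

theorem pow_mul_pow_le_sup_pow (P Q : Ideal A) (m n : ℕ) : P ^ m * Q ^ n ≤ (P ⊔ Q) ^ (m + n) := by
  rw [pow_add]
  exact mul_mono (pow_right_mono le_sup_left m) (pow_right_mono le_sup_right n)

theorem sup_pow_add_add_one_le (P Q : Ideal A) (a b : ℕ) :
    (P ⊔ Q) ^ (a + b + 1) ≤ P ^ (a + 1) * (P ⊔ Q) ^ b ⊔ Q ^ (b + 1) * (P ⊔ Q) ^ a := by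
  conv_lhs => rw [← add_eq_sup, add_pow, sum_eq_sup]
  refine Finset.sup_le fun i hi => mul_le_left.trans ?_
  rw [Finset.mem_range] at hi
  rcases le_or_gt (a + 1) i with h | h
  · refine le_sup_of_le_left ?_
    obtain ⟨c, rfl⟩ := Nat.exists_eq_add_of_le h
    rw [pow_add, mul_assoc]
    exact mul_mono_right ((pow_mul_pow_le_sup_pow P Q _ _).trans_eq (by congr 1; omega))
  · refine le_sup_of_le_right ?_
    obtain ⟨c, hc⟩ := Nat.exists_eq_add_of_le (show b + 1 ≤ a + b + 1 - i by omega)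
    rw [hc, pow_add, mul_comm, mul_assoc]
    exact mul_mono_right ((pow_mul_pow_le_sup_pow Q P _ _).trans_eq
      (by rw [sup_comm]; congr 1; omega))

theorem mem_radical_of_forall_mul_mem {𝔞 K : Ideal A} (hK : ∀ p ∈ 𝔞.minimalPrimes, ¬K ≤ p)
    {c : A} (hc : ∀ a ∈ K, c * a ∈ 𝔞) : c ∈ 𝔞.radical := by
  rw [← sInf_minimalPrimes]
  refine Submodule.mem_sInf.mpr fun p hp => ?_
  obtain ⟨a, haK, hap⟩ := Set.not_subset.mp (hK p hp)
  exact (hp.1.1.mem_or_mem (hp.1.2 (hc a haK))).resolve_right hap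

end Ideal

namespace Polynomial.IsIntegralEquation

variable {I J : Ideal A} {p : A[X]} {x : A} {r : ℕ}

theorem pow_smul_mem (hp : IsIntegralEquation I p) (hIJ : I ≤ J) (hx : x ∈ J)
    (hr : p.natDegree = r + 1) {N : Submodule A M} {n : M} (hn : n ∈ N)
    (hpn : p.eval x • n = 0) : x ^ (r + 1) • n ∈ I • J ^ r • N := by
  rw [eval_eq_sum_range, hr, Finset.sum_range_succ, ← hr, hp.1.coeff_natDegree, hr, one_mul,
    add_smul, Finset.sum_smul] at hpn
  rw [eq_neg_of_add_eq_zero_right hpn]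
  refine neg_mem (Submodule.sum_mem _ fun i hi => ?_)
  have hmem : p.coeff i • x ^ i • n ∈ (I ^ (r + 1 - i) * J ^ i) • N := by
    rw [Submodule.mul_smul]
    exact Submodule.smul_mem_smul (hr ▸ hp.2 i)
      (Submodule.smul_mem_smul (Ideal.pow_mem_pow hx i) hn)
  rw [mul_smul, ← Submodule.mul_smul]
  exact Submodule.smul_mono_left
    (Ideal.pow_mul_pow_le_mul_pow_s6 hIJ (Nat.lt_succ_iff.mp (Finset.mem_range.mp hi))) hmem

theorem span_singleton_pow_smul_le (hp : IsIntegralEquation I p) (hIJ : I ≤ J) (hx : x ∈ J)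
    (hr : p.natDegree = r + 1) {N : Submodule A M} (hpN : ∀ n ∈ N, p.eval x • n = 0) :
    Ideal.span {x} ^ (r + 1) • N ≤ I • J ^ r • N := by
  rw [Ideal.span_singleton_pow]
  refine Submodule.smul_le.mpr fun a ha n hn => ?_
  obtain ⟨b, rfl⟩ := Ideal.mem_span_singleton'.mp ha
  rw [mul_smul]
  exact Submodule.smul_mem _ b (hp.pow_smul_mem hIJ hx hr hn (hpN n hn))

end Polynomial.IsIntegralEquation

theorem Submodule.exists_isIntegralEquation_eval_smul_eq_zero [Nontrivial A] {I : Ideal A}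
    {N : Submodule A M} (hN : N.FG) {x : A} (hx : ∀ n ∈ N, x • n ∈ I • N) :
    ∃ p : A[X], IsIntegralEquation I p ∧ 0 < p.natDegree ∧ ∀ n ∈ N, p.eval x • n = 0 := by
  have : Module.Finite A N := Module.Finite.iff_fg.mpr hN
  have hrange : LinearMap.range (algebraMap A (Module.End A N) x) ≤ I • ⊤ := by
    rintro _ ⟨n, rfl⟩
    rw [Submodule.mem_smul_top_iff]
    exact hx n n.2
  obtain ⟨p, hmonic, -, hcoeff, hp⟩ :=
    LinearMap.exists_monic_and_natDegree_eq_and_coeff_mem_pow_and_aeval_eq_zero A _ I hrange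
  refine ⟨X * p, isIntegralEquation_X.mul ⟨hmonic, hcoeff⟩, ?_, fun n hn => ?_⟩
  · rw [monic_X.natDegree_mul hmonic, natDegree_X]
    omega
  · have hpn := congr(($hp ⟨n, hn⟩ : M))
    rw [aeval_algebraMap_apply, Module.algebraMap_end_apply, coe_aeval_eq_eval] at hpn
    rw [eval_mul, eval_X, mul_smul, (by simpa using hpn : p.eval x • n = 0), smul_zero]

namespace Submodule

variable {I J : Ideal A} {N : Submodule A M}

theorem sup_pow_smul_le {P Q : Ideal A} (hP : P ≤ J) (hQ : Q ≤ J) {a b : ℕ}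
    (ha : P ^ (a + 1) • N ≤ I • J ^ a • N) (hb : Q ^ (b + 1) • N ≤ I • J ^ b • N) :
    (P ⊔ Q) ^ (a + b + 1) • N ≤ I • J ^ (a + b) • N := by
  have hJI : ∀ c d, J ^ c • I • J ^ d • N = I • J ^ (c + d) • N := fun c d => by
    simp only [← Submodule.mul_smul]
    rw [pow_add]
    ring_nf
  have hPQ : ∀ c, (P ⊔ Q) ^ c ≤ J ^ c := Ideal.pow_right_mono (sup_le hP hQ)
  refine (smul_mono_left (Ideal.sup_pow_add_add_one_le P Q a b)).trans ?_
  rw [sup_smul, mul_comm, mul_comm (Q ^ _), Submodule.mul_smul, Submodule.mul_smul]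
  refine sup_le ((smul_mono (hPQ b) ha).trans_eq ?_) ((smul_mono (hPQ a) hb).trans_eq ?_)
  · rw [hJI, add_comm]
  · rw [hJI]

theorem exists_pow_succ_smul_le_of_fg (hJ : J.FG)
    (h : ∀ x ∈ J, ∃ r, Ideal.span {x} ^ (r + 1) • N ≤ I • J ^ r • N) :
    ∃ r, J ^ (r + 1) • N ≤ I • J ^ r • N := by
  classical
  obtain ⟨s, hs⟩ := hJ
  suffices ∀ t : Finset A, (t : Set A) ⊆ J →
      ∃ r, Ideal.span (t : Set A) ^ (r + 1) • N ≤ I • J ^ r • N by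
    simpa only [hs] using this s (hs ▸ Ideal.subset_span)
  intro t
  induction t using Finset.induction_on with
  | empty => exact fun _ => ⟨0, by simp⟩
  | insert x t _ ih =>
    intro hxt
    rw [Finset.coe_insert, Set.insert_subset_iff] at hxt
    obtain ⟨a, ha⟩ := h x hxt.1
    obtain ⟨b, hb⟩ := ih hxt.2
    refine ⟨a + b, ?_⟩
    rw [Finset.coe_insert, Ideal.span_insert]
    exact sup_pow_smul_le ((Ideal.span_singleton_le_iff_mem J).mpr hxt.1) (Ideal.span_le.mpr hxt.2)
      ha hb

end Submodule

theorem exists_span_singleton_pow_succ_smul_top_le [IsNoetherianRing A] [Module.Finite A M]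
    {I J K : Ideal A} (hIJ : I ≤ J) (hK : ∀ p ∈ (Module.annihilator A M).minimalPrimes, ¬K ≤ p)
    (hJK : J • K • (⊤ : Submodule A M) ≤ I • K • ⊤) {x : A} (hx : x ∈ J) :
    ∃ r, Ideal.span {x} ^ (r + 1) • (⊤ : Submodule A M) ≤ I • J ^ r • ⊤ := by
  cases subsingleton_or_nontrivial A
  · have := Module.subsingleton A M
    exact ⟨0, fun m _ => by simp [Subsingleton.elim m 0]⟩
  obtain ⟨p, hp, hdeg, hpK⟩ := Submodule.exists_isIntegralEquation_eval_smul_eq_zero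
    (IsNoetherian.noetherian (K • ⊤)) fun n hn => hJK (Submodule.smul_mem_smul hx hn)
  obtain ⟨s, hs⟩ : p.eval x ∈ (Module.annihilator A M).radical :=
    Ideal.mem_radical_of_forall_mul_mem hK fun a ha => Module.mem_annihilator.mpr fun m => by
      rw [mul_smul]
      exact hpK _ (Submodule.smul_mem_smul ha Submodule.mem_top)
  -- `p ^ (s + 1)` rather than `p ^ s`, so that the degree stays positive when `s = 0`
  refine ⟨(s + 1) * p.natDegree - 1, (hp.pow (s + 1)).span_singleton_pow_smul_le hIJ hx ?_
    fun m _ => ?_⟩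
  · rw [hp.1.natDegree_pow]
    have := Nat.mul_pos (by omega : 0 < s + 1) hdeg
    omega
  · rw [eval_pow, pow_succ]
    exact Module.mem_annihilator.mp (Ideal.mul_mem_right _ _ hs) m

end

theorem stmt_6_general {A M : Type*} [CommRing A] [IsNoetherianRing A]
    [AddCommGroup M] [Module A M] [Module.Finite A M]
    (hequi : ∀ p ∈ (Module.annihilator A M).minimalPrimes,
      ringKrullDim (A ⧸ p) = ringKrullDim (A ⧸ Module.annihilator A M))
    (I J : Ideal A) (hIJ : I ≤ J)
    (hdim : ringKrullDim (A ⧸ (I ⊔ Module.annihilator A M))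
      < ringKrullDim (A ⧸ Module.annihilator A M))
    (k : ℕ)
    (hred : ∃ n : ℕ, I • (J ^ n • (I ^ k • (⊤ : Submodule A M)))
      = J ^ (n + 1) • (I ^ k • (⊤ : Submodule A M))) :
    ∃ n' : ℕ, I • (J ^ n' • (⊤ : Submodule A M)) = J ^ (n' + 1) • (⊤ : Submodule A M) := by
  obtain ⟨n, hn⟩ := hred
  have hI : ∀ p ∈ (Module.annihilator A M).minimalPrimes, ¬I ≤ p := fun p hp hIp =>
    (hequi p hp ▸ hdim).not_ge
      (ringKrullDim_le_of_surjective _ (Ideal.Quotient.factor_surjective (sup_le hIp hp.1.2)))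
  have hK : ∀ p ∈ (Module.annihilator A M).minimalPrimes, ¬J ^ n * I ^ k ≤ p := by
    intro p hp hle
    have : p.IsPrime := hp.1.1
    refine hI p hp (Ideal.IsPrime.le_of_pow_le (n := n + k) (le_trans ?_ hle))
    rw [pow_add]
    exact Ideal.mul_mono_left (Ideal.pow_right_mono hIJ n)
  have hJK : J • (J ^ n * I ^ k) • (⊤ : Submodule A M) ≤ I • (J ^ n * I ^ k) • ⊤ := by
    rw [Submodule.mul_smul, ← Submodule.mul_smul J, ← pow_succ', hn]
  obtain ⟨r, hr⟩ := Submodule.exists_pow_succ_smul_le_of_fg (IsNoetherian.noetherian J)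
    fun x hx => exists_span_singleton_pow_succ_smul_top_le hIJ hK hJK hx
  refine ⟨r, le_antisymm ?_ hr⟩
  rw [pow_succ', Submodule.mul_smul]
  exact Submodule.smul_mono_left hIJ

/-- Part (3) of the five-part Lemma in Section 4: for an equidimensional finitely
generated module `M` over a Noetherian local ring with `dim M/IM < dim M`, if `I`
is a reduction of `(J, IᵏM)` for some `k ≥ 1`, then `I` is a reduction of `(J, M)`. -/
theorem stmt_6 {A M : Type*} [CommRing A] [IsLocalRing A] [IsNoetherianRing A]
    [AddCommGroup M] [Module A M] [Module.Finite A M]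
    (hequi : ∀ p ∈ (Module.annihilator A M).minimalPrimes,
      ringKrullDim (A ⧸ p) = ringKrullDim (A ⧸ Module.annihilator A M))
    (I J : Ideal A) (hIJ : I ≤ J)
    (hdim : ringKrullDim (A ⧸ (I ⊔ Module.annihilator A M))
      < ringKrullDim (A ⧸ Module.annihilator A M))
    (k : ℕ) (hk : 1 ≤ k)
    (hred : ∃ n : ℕ, I • (J ^ n • (I ^ k • (⊤ : Submodule A M)))
      = J ^ (n + 1) • (I ^ k • (⊤ : Submodule A M))) :
    ∃ n' : ℕ, I • (J ^ n' • (⊤ : Submodule A M)) = J ^ (n' + 1) • (⊤ : Submodule A M) :=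
  stmt_6_general hequi I J hIJ hdim k hred
end

section
/- Let A be a Noetherian ring, let I be an ideal of A, let M be a finitely generated A-module, and let x ∈ A be a nonzerodivisor on M (i.e. x • m = 0 implies m = 0 for m ∈ M). Then there exists p ≥ 0 such that for all j ≥ p, (IʲM :_M x) = I^{j−p} • (IᵖM :_M x). (Artin–Rees consequence established in the proof of Proposition 2.11.) -/
universe u v

section SameUniverse

/-- Same-universe version, directly from mathlib's Artin–Rees lemma. -/
theorem stmt_7_aux {A M : Type u} [CommRing A] [IsNoetherianRing A]
    [AddCommGroup M] [Module A M] [Module.Finite A M]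
    (I : Ideal A) (x : A) (hx : ∀ m : M, x • m = 0 → m = 0) :
    ∃ p : ℕ, ∀ j ≥ p,
      Submodule.comap (LinearMap.lsmul A M x) (I ^ j • (⊤ : Submodule A M))
        = I ^ (j - p) •
          Submodule.comap (LinearMap.lsmul A M x) (I ^ p • (⊤ : Submodule A M)) := by
  have hinj : Function.Injective (LinearMap.lsmul A M x) := by
    intro a b h
    simp only [LinearMap.lsmul_apply] at h
    have : x • (a - b) = 0 := by rw [smul_sub, h, sub_self]
    have := hx _ this
    rwa [sub_eq_zero] at this
  obtain ⟨p, hp⟩ := Ideal.exists_pow_inf_eq_pow_smul I (LinearMap.range (LinearMap.lsmul A M x))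
  refine ⟨p, fun j hj => ?_⟩
  apply Submodule.map_injective_of_injective hinj
  rw [Submodule.map_comap_eq, Submodule.map_smul'', Submodule.map_comap_eq, inf_comm,
    inf_comm (LinearMap.range (LinearMap.lsmul A M x)), hp j hj]

end SameUniverse

section Transfer

variable {A : Type u} {M : Type v} [CommRing A] [AddCommGroup M] [Module A M]

/-- Lift a submodule of `M` to a submodule of `ULift M` over `ULift A`. -/
def liftSub (N : Submodule A M) : Submodule (ULift.{v} A) (ULift.{u} M) where
  carrier := ULift.down ⁻¹' N
  add_mem' := fun ha hb => N.add_mem ha hb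
  zero_mem' := N.zero_mem
  smul_mem' := fun a _m hm => N.smul_mem a.down hm

@[simp] lemma mem_liftSub {N : Submodule A M} {m : ULift.{u} M} :
    m ∈ liftSub N ↔ m.down ∈ N := Iff.rfl

lemma liftSub_injective : Function.Injective (liftSub (A := A) (M := M)) := by
  intro N N' h
  ext m
  have := SetLike.ext_iff.mp h (ULift.up m)
  simpa using this

lemma liftSub_top : liftSub (⊤ : Submodule A M) = ⊤ := by
  ext m; simp

lemma mem_mapIdeal {J : Ideal A} {a : ULift.{v} A} :
    a ∈ J.map ((ULift.ringEquiv.{u, v}).symm : A ≃+* ULift A) ↔ a.down ∈ J := by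
  rw [Ideal.mem_map_of_equiv]
  constructor
  · rintro ⟨b, hb, rfl⟩; exact hb
  · intro h; exact ⟨a.down, h, rfl⟩

lemma liftSub_smul (J : Ideal A) (N : Submodule A M) :
    liftSub (J • N) = J.map ((ULift.ringEquiv.{u, v}).symm : A ≃+* ULift A) • liftSub N := by
  apply le_antisymm
  · intro m hm
    rw [mem_liftSub] at hm
    have : (ULift.up m.down : ULift.{u} M) ∈
        J.map ((ULift.ringEquiv.{u, v}).symm : A ≃+* ULift A) • liftSub N := by
      refine Submodule.smul_induction_on hm ?_ ?_
      · intro a ha n hn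
        have : (ULift.up (a • n) : ULift.{u} M)
            = (ULift.up a : ULift.{v} A) • (ULift.up n : ULift.{u} M) := rfl
        rw [this]
        exact Submodule.smul_mem_smul (mem_mapIdeal.mpr ha) hn
      · intro n₁ n₂ h₁ h₂
        exact add_mem h₁ h₂
    exact this
  · refine Submodule.smul_le.mpr ?_
    intro a ha m hm
    rw [mem_liftSub] at hm ⊢
    exact Submodule.smul_mem_smul (mem_mapIdeal.mp ha) hm

lemma liftSub_comap_lsmul (x : A) (N : Submodule A M) :
    liftSub (Submodule.comap (LinearMap.lsmul A M x) N)
      = Submodule.comap (LinearMap.lsmul (ULift.{v} A) (ULift.{u} M) (ULift.up x))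
          (liftSub N) := rfl

lemma finite_ulift [Module.Finite A M] : Module.Finite (ULift.{v} A) (ULift.{u} M) := by
  classical
  obtain ⟨s, hs⟩ := Module.Finite.fg_top (R := A) (M := M)
  refine ⟨⟨s.image ULift.up, ?_⟩⟩
  rw [eq_top_iff]
  intro m _
  have : ∀ y : M, y ∈ Submodule.span A (s : Set M) →
      (ULift.up y : ULift.{u} M) ∈
        Submodule.span (ULift.{v} A) ((s.image ULift.up : Finset (ULift.{u} M)) : Set _) := by
    intro y hy
    refine Submodule.span_induction ?_ ?_ ?_ ?_ hy
    · intro z hz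
      refine Submodule.subset_span ?_
      rw [Finset.coe_image]
      exact Set.mem_image_of_mem _ hz
    · exact Submodule.zero_mem _
    · intro z w _ _ hz hw
      exact Submodule.add_mem _ hz hw
    · intro a z _ hz
      have : (ULift.up (a • z) : ULift.{u} M)
          = (ULift.up a : ULift.{v} A) • (ULift.up z : ULift.{u} M) := rfl
      rw [this]
      exact Submodule.smul_mem _ _ hz
  have := this m.down (by rw [hs]; trivial)
  simpa using this

end Transfer

/-- Artin–Rees consequence from the proof of Proposition 2.11: if `x` is a
nonzerodivisor on a finitely generated module `M` over a Noetherian ring, then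
there exists `p` such that `(IʲM :_M x) = I^{j-p}(IᵖM :_M x)` for all `j ≥ p`. -/
theorem stmt_7 {A M : Type*} [CommRing A] [IsNoetherianRing A]
    [AddCommGroup M] [Module A M] [Module.Finite A M]
    (I : Ideal A) (x : A) (hx : ∀ m : M, x • m = 0 → m = 0) :
    ∃ p : ℕ, ∀ j ≥ p,
      Submodule.comap (LinearMap.lsmul A M x) (I ^ j • (⊤ : Submodule A M))
        = I ^ (j - p) •
          Submodule.comap (LinearMap.lsmul A M x) (I ^ p • (⊤ : Submodule A M)) := by
  have hNoeth : IsNoetherianRing (ULift A) :=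
    isNoetherianRing_of_ringEquiv A ULift.ringEquiv.symm
  have hFin : Module.Finite (ULift A) (ULift M) := finite_ulift
  have hx' : ∀ m : ULift M, (ULift.up x : ULift A) • m = 0 → m = 0 := by
    intro m hm
    have : x • m.down = 0 := congrArg ULift.down hm
    have := hx _ this
    exact ULift.ext _ _ this
  obtain ⟨p, hp⟩ := stmt_7_aux (I.map ((ULift.ringEquiv).symm : A ≃+* ULift A))
    (ULift.up x) hx'
  refine ⟨p, fun j hj => ?_⟩
  apply liftSub_injective
  have hpow : ∀ n : ℕ, liftSub (I ^ n • (⊤ : Submodule A M)) =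
      (I.map ((ULift.ringEquiv).symm : A ≃+* ULift A)) ^ n
        • (⊤ : Submodule (ULift A) (ULift M)) := by
    intro n
    rw [liftSub_smul, liftSub_top, Ideal.map_pow]
  rw [liftSub_comap_lsmul, hpow j, liftSub_smul, liftSub_comap_lsmul, hpow p,
    Ideal.map_pow]
  exact hp j hj
end
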